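/- arXiv:2305.00288 — 2 statements merged into one kernel-verified Lean document; each statement's English description precedes it below -/
import Mathlib

section
/- The curve in ℙ²_K defined by x⁴ + (ζ₃ − 1)x³y + (3ζ₃ + 2)x³z − 3x²z² + (2ζ₃ + 2)xy³ − 3ζ₃xy²z + 3ζ₃xyz² − 2ζ₃xz³ − ζ₃y³z + 3ζ₃y²z² + (−ζ₃ + 1)yz³ + (ζ₃ + 1)z⁴ = 0 is smooth, i.e., the defining homogeneous quartic and its three partial derivatives have no common zero in ℙ² over an algebraic closure of K. -/
/-!
STATEMENT 1: The plane quartic curve (Equation (1)) over K = ℚ₃(ζ₃) is smooth: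
the defining homogeneous quartic and its three partial derivatives have no common
projective zero over an algebraic closure of K.
-/

open MvPolynomial

noncomputable section

instance : Fact (Nat.Prime 3) := ⟨by norm_num⟩

/-- K = ℚ₃(ζ₃). -/
abbrev K := CyclotomicField 3 ℚ_[3]

/-- The homogeneous quartic of Equation (1), with variables x = X 0, y = X 1, z = X 2,
expressed in a primitive cube root of unity ζ. -/
def quartic (k : Type*) [CommRing k] (ζ : k) : MvPolynomial (Fin 3) k :=
  X 0 ^ 4 + C (ζ - 1) * X 0 ^ 3 * X 1 + C (3*ζ + 2) * X 0 ^ 3 * X 2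
    - C 3 * X 0 ^ 2 * X 2 ^ 2 + C (2*ζ + 2) * X 0 * X 1 ^ 3
    - C (3*ζ) * X 0 * X 1 ^ 2 * X 2 + C (3*ζ) * X 0 * X 1 * X 2 ^ 2
    - C (2*ζ) * X 0 * X 2 ^ 3 - C ζ * X 1 ^ 3 * X 2 + C (3*ζ) * X 1 ^ 2 * X 2 ^ 2
    + C (1 - ζ) * X 1 * X 2 ^ 3 + C (ζ + 1) * X 2 ^ 4

section Aux

variable {R A : Type*} [CommRing R] [CommRing A] [Algebra R A]


lemma aux_pd0 (ζ : R) (p : Fin 3 → A) :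
    aeval p (pderiv 0 (quartic R ζ)) = (4)*(p 0)^3 + (-3 + 3*(algebraMap R A ζ))*(p 0)^2*(p 1) + (6 + 9*(algebraMap R A ζ))*(p 0)^2*(p 2) + (-6)*(p 0)*(p 2)^2 + (2 + 2*(algebraMap R A ζ))*(p 1)^3 + (-3*(algebraMap R A ζ))*(p 1)^2*(p 2) + (3*(algebraMap R A ζ))*(p 1)*(p 2)^2 + (-2*(algebraMap R A ζ))*(p 2)^3 := by
  simp only [quartic, map_add, map_sub, pderiv_mul, pderiv_pow, pderiv_C,
    pderiv_X_self, pderiv_X_of_ne (by decide : (0:Fin 3) ≠ 1),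
    pderiv_X_of_ne (by decide : (0:Fin 3) ≠ 2),
    pderiv_X_of_ne (by decide : (1:Fin 3) ≠ 0),
    pderiv_X_of_ne (by decide : (1:Fin 3) ≠ 2),
    pderiv_X_of_ne (by decide : (2:Fin 3) ≠ 0),
    pderiv_X_of_ne (by decide : (2:Fin 3) ≠ 1)]
  simp only [aeval_X, aeval_C, map_add, map_sub, map_mul, map_pow, map_one, map_ofNat,
    map_zero, map_natCast, mul_zero, zero_mul, add_zero, zero_add, mul_one, sub_zero]
  ring


lemma aux_pd1 (ζ : R) (p : Fin 3 → A) :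
    aeval p (pderiv 1 (quartic R ζ)) = (-1 + (algebraMap R A ζ))*(p 0)^3 + (6 + 6*(algebraMap R A ζ))*(p 0)*(p 1)^2 + (-6*(algebraMap R A ζ))*(p 0)*(p 1)*(p 2) + (3*(algebraMap R A ζ))*(p 0)*(p 2)^2 + (-3*(algebraMap R A ζ))*(p 1)^2*(p 2) + (6*(algebraMap R A ζ))*(p 1)*(p 2)^2 + (1 + -1*(algebraMap R A ζ))*(p 2)^3 := by
  simp only [quartic, map_add, map_sub, pderiv_mul, pderiv_pow, pderiv_C,
    pderiv_X_self, pderiv_X_of_ne (by decide : (0:Fin 3) ≠ 1),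
    pderiv_X_of_ne (by decide : (0:Fin 3) ≠ 2),
    pderiv_X_of_ne (by decide : (1:Fin 3) ≠ 0),
    pderiv_X_of_ne (by decide : (1:Fin 3) ≠ 2),
    pderiv_X_of_ne (by decide : (2:Fin 3) ≠ 0),
    pderiv_X_of_ne (by decide : (2:Fin 3) ≠ 1)]
  simp only [aeval_X, aeval_C, map_add, map_sub, map_mul, map_pow, map_one, map_ofNat,
    map_zero, map_natCast, mul_zero, zero_mul, add_zero, zero_add, mul_one, sub_zero]
  ring


lemma aux_pd2 (ζ : R) (p : Fin 3 → A) :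
    aeval p (pderiv 2 (quartic R ζ)) = (2 + 3*(algebraMap R A ζ))*(p 0)^3 + (-6)*(p 0)^2*(p 2) + (-3*(algebraMap R A ζ))*(p 0)*(p 1)^2 + (6*(algebraMap R A ζ))*(p 0)*(p 1)*(p 2) + (-6*(algebraMap R A ζ))*(p 0)*(p 2)^2 + (-1*(algebraMap R A ζ))*(p 1)^3 + (6*(algebraMap R A ζ))*(p 1)^2*(p 2) + (3 + -3*(algebraMap R A ζ))*(p 1)*(p 2)^2 + (4 + 4*(algebraMap R A ζ))*(p 2)^3 := by
  simp only [quartic, map_add, map_sub, pderiv_mul, pderiv_pow, pderiv_C,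
    pderiv_X_self, pderiv_X_of_ne (by decide : (0:Fin 3) ≠ 1),
    pderiv_X_of_ne (by decide : (0:Fin 3) ≠ 2),
    pderiv_X_of_ne (by decide : (1:Fin 3) ≠ 0),
    pderiv_X_of_ne (by decide : (1:Fin 3) ≠ 2),
    pderiv_X_of_ne (by decide : (2:Fin 3) ≠ 0),
    pderiv_X_of_ne (by decide : (2:Fin 3) ≠ 1)]
  simp only [aeval_X, aeval_C, map_add, map_sub, map_mul, map_pow, map_one, map_ofNat,
    map_zero, map_natCast, mul_zero, zero_mul, add_zero, zero_add, mul_one, sub_zero]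
  ring


set_option maxHeartbeats 2000000 in
set_option maxRecDepth 8000 in
lemma aux_vanish {F : Type*} [Field F] [CharZero F] (w a b c : F) (hw : w^2 + w + 1 = 0)
    (h0 : (4)*a^3 + (-3 + 3*w)*a^2*b + (6 + 9*w)*a^2*c + (-6)*a*c^2 + (2 + 2*w)*b^3 + (-3*w)*b^2*c + (3*w)*b*c^2 + (-2*w)*c^3 = 0)
    (h1 : (-1 + w)*a^3 + (6 + 6*w)*a*b^2 + (-6*w)*a*b*c + (3*w)*a*c^2 + (-3*w)*b^2*c + (6*w)*b*c^2 + (1 + -1*w)*c^3 = 0)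
    (h2 : (2 + 3*w)*a^3 + (-6)*a^2*c + (-3*w)*a*b^2 + (6*w)*a*b*c + (-6*w)*a*c^2 + (-1*w)*b^3 + (6*w)*b^2*c + (3 + -3*w)*b*c^2 + (4 + 4*w)*c^3 = 0)
    : a = 0 ∧ b = 0 ∧ c = 0 := by
  have ha7 : a ^ 7 = 0 := by
    have hs : (423792 : F) * a ^ 7 = 0 := by
      linear_combination ((105948)*a^4 + (79461 + -79461*w)*a^3*b + (-158922 + -238383*w)*a^3*c + (-222192 + -520704*w)*a^2*b^2 + (-289512 + 204552*w)*a^2*b*c + (181368 + 330120*w)*a^2*c^2 + (1207314 + 433674*w)*a*b^3 + (-1830264 + -2761296*w)*a*b^2*c + (294246 + 2069061*w)*a*b*c^2 + (332199 + -276852*w)*a*c^3 + (1856 + 36544*w)*b^4 + (-524544 + -932625*w)*b^3*c + (947673 + 2247078*w)*b^2*c^2 + (531049 + -1313731*w)*b*c^3 + (-111558 + -28833*w)*c^4) * h0 + ((-136623 + -752145*w)*a^2*b^2 + (-91236 + 1317018*w)*a^2*b*c + (652689 + 629010*w)*a^2*c^2 + (-1276752 + 202656*w)*a*b^3 + (3134796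 + 442260*w)*a*b^2*c + (-3038238 + -2106336*w)*a*b*c^2 + (-449646 + 527466*w)*a*c^3 + (-862726 + -103790*w)*b^4 + (3568884 + 1160799*w)*b^3*c + (-3864813 + -3669921*w)*b^2*c^2 + (152965 + -167638*w)*b*c^3 + (-534774 + -374136*w)*c^4) * h1 + ((25344 + 2798208*w)*a*b^3 + (3949800 + 203184*w)*a*b^2*c + (-2290848 + -1283136*w)*a*b*c^2 + (368076 + 352596*w)*a*c^3 + (73088 + 69376*w)*b^4 + (1155888 + -198168*w)*b^3*c + (-3104724 + -215220*w)*b^2*c^2 + (1700908 + 1459988*w)*b*c^3 + (12012 + -229632*w)*c^4) * h2 + (990528*a^5*b^2 + 113280*a^5*b*c + 1516437*a^5*c^2 + -7035168*a^4*b^3 + 3020868*a^4*b^2*c + 3124416*a^4*b*c^2 + -4556334*a^4*c^3 + 3266432*a^3*b^4 + -8362068*a^3*b^3*c + 28867779*a^3*b^2*c^2 + -21624086*a^3*b*c^3 + 1190904*a^3*c^4 + 8110464*a^2*b^5 + -19375992*a^2*b^4*c + 38036187*a^2*b^3*c^2 + -30868320*a^2*b^2*c^3 + 8541192*a^2*b*c^4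 + 2081925*a^2*c^5 + 2761728*a*b^6 + -17752776*a*b^5*c + 22535490*a*b^4*c^2 + -15403476*a*b^3*c^3 + -3166770*a*b^2*c^4 + 14283696*a*b*c^5 + -1692006*a*c^6 + -3712*b^7 + 1049088*b^6*c + -2114610*b^5*c^2 + -3959388*b^4*c^3 + 1344852*b^3*c^4 + 11180985*b^2*c^5 + -6992633*b*c^6 + 486726*c^7) * hw
    have : (423792 : F) ≠ 0 := by norm_num
    exact (mul_eq_zero.mp hs).resolve_left this
  have hb7 : b ^ 7 = 0 := by
    have hs : (105948 : F) * b ^ 7 = 0 := by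
      linear_combination ((-151794 + -69417*w)*a^2*b^2 + (165870 + 74358*w)*a^2*b*c + (35397 + 25308*w)*a^2*c^2 + (269880 + -175674*w)*a*b^3 + (-804741 + -557259*w)*a*b^2*c + (432759 + 255522*w)*a*b*c^2 + (-66006 + 12999*w)*a*c^3 + (80616 + 31548*w)*b^4 + (-635596 + -514172*w)*b^3*c + (603900 + 575616*w)*b^2*c^2 + (-257400 + -309072*w)*b*c^3 + (98848 + -85492*w)*c^4) * h0 + ((-312228 + -294948*w)*a^2*b^2 + (343176 + 320304*w)*a^2*b*c + (60648 + 80940*w)*a^2*c^2 + (-44322 + 395703*w)*a*b^3 + (-93894 + -918978*w)*a*b^2*c + (-277743 + 757044*w)*a*b*c^2 + (19056 + 149328*w)*a*c^3 + (-38064 + 288882*w)*b^4 + (410951 + -817079*w)*b^3*c + (-1019913 + 194238*w)*b^2*c^2 + (-573534 + -572781*w)*b*c^3 + (-79640 + 36020*w)*c^4) * h1 + ((874812 + 1047132*w)*a*b^3 + (223062 + -922221*w)*a*b^2*c + (4650 + 468306*w)*a*b*c^2 + (-70419 + -196212*w)*a*c^3 + (169044 + 7812*w)*b^4 + (-141736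 + -671570*w)*b^3*c + (-2613 + 1205133*w)*b^2*c^2 + (243867 + -146022*w)*b*c^3 + (54250 + 599*w)*c^4) * h2 + (294948*a^5*b^2 + -320304*a^5*b*c + -80940*a^5*c^2 + -3328848*a^4*b^3 + 4087320*a^4*b^2*c + -2907108*a^4*b*c^2 + 211536*a^4*c^3 + 1984392*a^3*b^4 + 2393120*a^3*b^3*c + 2760156*a^3*b^2*c^2 + -1803120*a^3*b*c^3 + -397628*a^3*c^4 + 811368*a^2*b^5 + -1144596*a^2*b^4*c + 7989804*a^2*b^3*c^2 + -9041832*a^2*b^2*c^3 + 5557524*a^2*b*c^4 + -724272*a^2*c^5 + -311376*a*b^6 + -856224*a*b^5*c + 3113220*a*b^4*c^2 + -4364472*a*b^3*c^3 + 3288936*a*b^2*c^4 + -1074000*a*b*c^5 + 855708*a*c^6 + -55284*b^7 + 1271192*b^6*c + -1714932*b^5*c^2 + 301896*b^4*c^3 + -33864*b^3*c^4 + 298764*b^2*c^5 + -564684*b*c^6 + -137360*c^7) * hw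
    have : (105948 : F) ≠ 0 := by norm_num
    exact (mul_eq_zero.mp hs).resolve_left this
  have hc7 : c ^ 7 = 0 := by
    have hs : (105948 : F) * c ^ 7 = 0 := by
      linear_combination ((4932 + 68931*w)*a^2*b^2 + (-16398 + -59760*w)*a^2*b*c + (43443 + -27387*w)*a^2*c^2 + (-239511 + -198057*w)*a*b^3 + (83442 + 376383*w)*a*b^2*c + (-131124 + -324900*w)*a*b*c^2 + (49833 + 74604*w)*a*c^3 + (5032 + 3008*w)*b^4 + (35536 + 143972*w)*b^3*c + (-249012 + -418956*w)*b^2*c^2 + (115328 + 338176*w)*b*c^3 + (-151816 + -212456*w)*c^4) * h0 + ((-78756 + 98484*w)*a^2*b^2 + (35952 + -101544*w)*a^2*b*c + (152364 + 21408*w)*a^2*c^2 + (299976 + 91383*w)*a*b^3 + (-601290 + -180876*w)*a*b^2*c + (366735 + 305625*w)*a*b*c^2 + (182340 + 254496*w)*a*c^3 + (185245 + 108323*w)*b^4 + (-601862 + -358153*w)*b^3*c + (480036 + 439488*w)*b^2*c^2 + (-288295 + 195352*w)*b*c^3 + (-39796 + 44620*w)*c^4) * h1 + ((235776 + -366480*w)*a*b^3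 + (-497892 + -80721*w)*a*b^2*c + (406818 + 2688*w)*a*b*c^2 + (-152157 + -11559*w)*a*c^3 + (6016 + -4048*w)*b^4 + (-246791 + -141409*w)*b^3*c + (458646 + 107259*w)*b^2*c^2 + (-1312 + 135412*w)*b*c^3 + (-1939 + -133448*w)*c^4) * h2 + (-98484*a^5*b^2 + 101544*a^5*b*c + -21408*a^5*c^2 + 801264*a^4*b^3 + -18060*a^4*b^2*c + 306312*a^4*b*c^2 + 26664*a^4*c^3 + -92912*a^3*b^4 + 2635912*a^3*b^3*c + -4207176*a^3*b^2*c^2 + 2531780*a^3*b*c^3 + -379936*a^3*c^4 + -1794624*a^2*b^5 + 3753048*a^2*b^4*c + -6165360*a^2*b^3*c^2 + 4077300*a^2*b^2*c^3 + -1977984*a^2*b*c^4 + 1045896*a^2*c^5 + -632448*a*b^6 + 3444288*a*b^5*c + -3295104*a*b^4*c^2 + 2093916*a*b^3*c^3 + 117108*a*b^2*c^4 + -845568*a*b*c^5 + -484608*a*c^6 + -10064*b^7 + -71072*b^6*c + 479976*b^5*c^2 + 300408*b^4*c^3 + 516720*b^3*c^4 + -2310684*b^2*c^5 + 299360*b*c^6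 + 153500*c^7) * hw
    have : (105948 : F) ≠ 0 := by norm_num
    exact (mul_eq_zero.mp hs).resolve_left this
  refine ⟨?_, ?_, ?_⟩ <;>
    [exact pow_eq_zero_iff (by norm_num) |>.mp ha7;
     exact pow_eq_zero_iff (by norm_num) |>.mp hb7;
     exact pow_eq_zero_iff (by norm_num) |>.mp hc7]

end Aux

theorem stmt1 (ζ : K) (hζ : IsPrimitiveRoot ζ 3) :
    ∀ p : Fin 3 → AlgebraicClosure K, p ≠ 0 →
      ¬ (aeval p (quartic K ζ) = 0 ∧ ∀ i, aeval p (pderiv i (quartic K ζ)) = 0) := by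
  intro p hp h
  obtain ⟨_, hd⟩ := h
  have hz : ζ ^ 2 + ζ + 1 = 0 := by
    have h3 : ζ ^ 3 = 1 := hζ.pow_eq_one
    have hne : ζ - 1 ≠ 0 := sub_ne_zero.mpr (hζ.ne_one (by norm_num))
    have : (ζ - 1) * (ζ ^ 2 + ζ + 1) = 0 := by linear_combination h3
    exact (mul_eq_zero.mp this).resolve_left hne
  have hw : (algebraMap K (AlgebraicClosure K) ζ) ^ 2 + algebraMap K (AlgebraicClosure K) ζ + 1 = 0 := by
    have := congrArg (algebraMap K (AlgebraicClosure K)) hz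
    simpa using this
  have h0 := hd 0; rw [aux_pd0] at h0
  have h1 := hd 1; rw [aux_pd1] at h1
  have h2 := hd 2; rw [aux_pd2] at h2
  obtain ⟨ha, hb, hc⟩ := aux_vanish (algebraMap K (AlgebraicClosure K) ζ) (p 0) (p 1) (p 2) hw h0 h1 h2
  apply hp
  funext i
  fin_cases i <;> assumption

end
end

section
/- The point [a² : a : 1], where a³ = −(ζ₃ + 1), is an inflection point of the plane quartic Y defined by Equation (1): the point lies on Y and the tangent line to Y at this point meets Y with intersection multiplicity at least 3 at this point. -/
/-!
STATEMENT 2: The point [a² : a : 1] with a³ = −(ζ₃ + 1) (here K′ = ℚ₃(ζ₉), ζ₃ = ζ₉³,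
a = ζ₉²) is an inflection point of the quartic Y of Equation (1): it is a smooth point
of Y, and the tangent line to Y at this point meets Y with intersection multiplicity
at least 3 there.
-/

open MvPolynomial

set_option maxHeartbeats 2000000

noncomputable section

/-- K′ = ℚ₃(ζ₉). -/
abbrev Kprime := CyclotomicField 9 ℚ_[3]

theorem stmt2 (ζ : Kprime) (hζ : IsPrimitiveRoot ζ 9) (a : Kprime) (ha : a = ζ ^ 2)
    (F : MvPolynomial (Fin 3) Kprime) (hF : F = quartic Kprime (ζ ^ 3))
    (P : Fin 3 → Kprime) (hP : P = ![a ^ 2, a, 1]) :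
    -- a³ + ζ₃ + 1 = 0, the point lies on Y, and it is a smooth point of Y
    a ^ 3 + ζ ^ 3 + 1 = 0 ∧
    aeval P F = 0 ∧
    (∃ i, aeval P (pderiv i F) ≠ 0) ∧
    -- there is a direction d spanning (with P) the tangent line at P, and the restriction
    -- of F to the line t ↦ P + t·d vanishes to order ≥ 3 at t = 0
    ∃ d : Fin 3 → Kprime, (∀ c : Kprime, d ≠ c • P) ∧
      (∑ i, aeval P (pderiv i F) * d i = 0) ∧
      (Polynomial.X ^ 3 ∣
        aeval (fun i => Polynomial.C (P i) + Polynomial.X * Polynomial.C (d i)) F) := by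
  have h9 : ζ ^ 9 = 1 := hζ.pow_eq_one
  have h3ne : ζ ^ 3 ≠ 1 := hζ.pow_ne_one_of_pos_of_lt (by norm_num) (by norm_num)
  have h6 : ζ ^ 6 + ζ ^ 3 + 1 = 0 := by
    have hmul : (ζ ^ 3 - 1) * (ζ ^ 6 + ζ ^ 3 + 1) = 0 := by linear_combination h9
    rcases mul_eq_zero.mp hmul with h | h
    · exact absurd (by linear_combination h) h3ne
    · exact h
  have hd0ne : (-6 : Kprime) - 3 * ζ ^ 3 ≠ 0 := by
    intro h
    have h3 : (3 : Kprime) = 0 := by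
      linear_combination h6 + ((ζ ^ 3 - 1) / 3) * h
    norm_num at h3
  subst ha hF hP
  have e0 : (pderiv (1 : Fin 3)) (X 0 : MvPolynomial (Fin 3) Kprime) = 0 :=
    pderiv_X_of_ne (by decide)
  have e2 : (pderiv (1 : Fin 3)) (X 2 : MvPolynomial (Fin 3) Kprime) = 0 :=
    pderiv_X_of_ne (by decide)
  have e1 : (pderiv (1 : Fin 3)) (X 1 : MvPolynomial (Fin 3) Kprime) = 1 :=
    pderiv_X_self 1
  have p1 : (pderiv (1 : Fin 3)) (1 : MvPolynomial (Fin 3) Kprime) = 0 := by simp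
  have p2 : (pderiv (1 : Fin 3)) (2 : MvPolynomial (Fin 3) Kprime) = 0 := by
    rw [show (2 : MvPolynomial (Fin 3) Kprime) = C 2 from (map_ofNat C 2).symm]; simp
  have p3 : (pderiv (1 : Fin 3)) (3 : MvPolynomial (Fin 3) Kprime) = 0 := by
    rw [show (3 : MvPolynomial (Fin 3) Kprime) = C 3 from (map_ofNat C 3).symm]; simp
  have hg1 : aeval ![(ζ^2) ^ 2, ζ^2, 1] (pderiv 1 (quartic Kprime (ζ ^ 3)))
      = -6 - 3 * ζ ^ 3 := by
    simp only [quartic, map_add, map_sub, map_mul, pderiv_C, pderiv_mul,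
      Derivation.leibniz_pow, e0, e1, e2, p1, p2, p3, smul_eq_mul, mul_zero, zero_mul, mul_one,
      add_zero, zero_add, map_pow, map_natCast, map_ofNat, map_one, map_zero,
      nsmul_eq_mul, aeval_X, aeval_C, Algebra.algebraMap_self_apply,
      Matrix.cons_val_zero, Matrix.cons_val_one, Matrix.head_cons, Matrix.cons_val_two,
      Matrix.tail_cons]
    ring_nf
    linear_combination (7 - 5 * ζ ^ 3 + 6 * ζ ^ 5 - 2 * ζ ^ 6 + ζ ^ 9) * h6
  refine ⟨by linear_combination h6, ?_, ?_, ?_⟩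
  · -- point on the curve
    simp only [quartic, map_add, map_sub, map_mul, map_pow, aeval_X, aeval_C, Algebra.algebraMap_self_apply,
      Matrix.cons_val_zero, Matrix.cons_val_one, Matrix.head_cons, Matrix.cons_val_two,
      Matrix.tail_cons]
    linear_combination (1 + ζ ^ 2 - 2 * ζ ^ 5 - ζ ^ 6 + ζ ^ 7 - 2 * ζ ^ 8 + 3 * ζ ^ 9
      + ζ ^ 10 + ζ ^ 11) * h6
  · -- smooth point: ∂F/∂y at P is −6 − 3ζ³ ≠ 0
    refine ⟨1, ?_⟩
    rw [hg1]
    exact hd0ne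
  · -- the tangent direction
    refine ⟨![(-6 : Kprime) - 3 * ζ ^ 3, -3 * ζ ^ 2 + 3 * ζ ^ 5, 0], ?_, ?_, ?_⟩
    · intro c h
      have h2 := congrFun h 2
      simp at h2
      have h0 := congrFun h 0
      rw [← h2] at h0
      simp at h0
      exact hd0ne h0
    · have f0 : (pderiv (0 : Fin 3)) (X 0 : MvPolynomial (Fin 3) Kprime) = 1 :=
        pderiv_X_self 0
      have f1 : (pderiv (0 : Fin 3)) (X 1 : MvPolynomial (Fin 3) Kprime) = 0 :=
        pderiv_X_of_ne (by decide)
      have f2 : (pderiv (0 : Fin 3)) (X 2 : MvPolynomial (Fin 3) Kprime) = 0 :=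
        pderiv_X_of_ne (by decide)
      have q1 : (pderiv (0 : Fin 3)) (1 : MvPolynomial (Fin 3) Kprime) = 0 := by simp
      have q2 : (pderiv (0 : Fin 3)) (2 : MvPolynomial (Fin 3) Kprime) = 0 := by
        rw [show (2 : MvPolynomial (Fin 3) Kprime) = C 2 from (map_ofNat C 2).symm]; simp
      have q3 : (pderiv (0 : Fin 3)) (3 : MvPolynomial (Fin 3) Kprime) = 0 := by
        rw [show (3 : MvPolynomial (Fin 3) Kprime) = C 3 from (map_ofNat C 3).symm]; simp
      have hg0 : aeval ![(ζ^2) ^ 2, ζ^2, 1] (pderiv 0 (quartic Kprime (ζ ^ 3)))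
          = 3 * ζ ^ 2 - 3 * ζ ^ 5 := by
        simp only [quartic, map_add, map_sub, map_mul, pderiv_C, pderiv_mul,
          Derivation.leibniz_pow, f0, f1, f2, q1, q2, q3, smul_eq_mul, mul_zero, zero_mul,
          mul_one, add_zero, zero_add, map_pow, map_natCast, map_ofNat, map_one, map_zero,
          nsmul_eq_mul, aeval_X, aeval_C, Algebra.algebraMap_self_apply,
          Matrix.cons_val_zero, Matrix.cons_val_one, Matrix.head_cons, Matrix.cons_val_two,
          Matrix.tail_cons]
        ring_nf
        linear_combination (-3 * ζ ^ 2 - 2 * ζ ^ 3 - 6 * ζ ^ 4 + 9 * ζ ^ 5 + 4 * ζ ^ 6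
          + 3 * ζ ^ 7) * h6
      rw [Fin.sum_univ_three]
      simp only [Matrix.cons_val_zero, Matrix.cons_val_one, Matrix.head_cons,
        Matrix.cons_val_two, Matrix.tail_cons, mul_zero, add_zero]
      rw [hg0, hg1]
      ring
    · refine ⟨Polynomial.C (243 * ζ ^ 2 + 243 * ζ ^ 4 + 243 * ζ ^ 5)
        + Polynomial.C (-1458 - 1458 * ζ ^ 2 - 729 * ζ ^ 3 - 729 * ζ ^ 5) * Polynomial.X, ?_⟩
      have h6' : (Polynomial.C ζ : Polynomial Kprime) ^ 6 + Polynomial.C ζ ^ 3 + 1 = 0 := by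
        have := congrArg (Polynomial.C : Kprime → Polynomial Kprime) h6
        simpa using this
      simp only [quartic, map_add, map_sub, map_mul, map_pow, aeval_X, aeval_C,
        Matrix.cons_val_zero, Matrix.cons_val_one, Matrix.head_cons, Matrix.cons_val_two,
        Matrix.tail_cons, Polynomial.algebraMap_eq, map_one, map_ofNat, map_neg, map_zero,
        mul_zero, add_zero]
      linear_combination
        ((1 + (Polynomial.C ζ) ^ 2 - 2 * (Polynomial.C ζ) ^ 5 - (Polynomial.C ζ) ^ 6
          + (Polynomial.C ζ) ^ 7 - 2 * (Polynomial.C ζ) ^ 8 + 3 * (Polynomial.C ζ) ^ 9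
          + (Polynomial.C ζ) ^ 10 + (Polynomial.C ζ) ^ 11)
        + (-3 * (Polynomial.C ζ) ^ 2 + 12 * (Polynomial.C ζ) ^ 3 + 36 * (Polynomial.C ζ) ^ 4
          - 9 * (Polynomial.C ζ) ^ 5 - 18 * (Polynomial.C ζ) ^ 6 - 18 * (Polynomial.C ζ) ^ 7
          - 36 * (Polynomial.C ζ) ^ 8 - 12 * (Polynomial.C ζ) ^ 9 + 9 * (Polynomial.C ζ) ^ 10
          - 9 * (Polynomial.C ζ) ^ 11 + 3 * (Polynomial.C ζ) ^ 14) * Polynomial.X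
        + (-108 + 216 * (Polynomial.C ζ) ^ 4 + 54 * (Polynomial.C ζ) ^ 5
          + 81 * (Polynomial.C ζ) ^ 6 + 243 * (Polynomial.C ζ) ^ 7 + 135 * (Polynomial.C ζ) ^ 8
          - 54 * (Polynomial.C ζ) ^ 9 - 81 * (Polynomial.C ζ) ^ 10 - 27 * (Polynomial.C ζ) ^ 11
          + 27 * (Polynomial.C ζ) ^ 13) * Polynomial.X ^ 2
        + (-432 - 27 * (Polynomial.C ζ) ^ 2 - 864 * (Polynomial.C ζ) ^ 3
          - 1107 * (Polynomial.C ζ) ^ 4 - 108 * (Polynomial.C ζ) ^ 5 - 27 * (Polynomial.C ζ) ^ 7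
          - 27 * (Polynomial.C ζ) ^ 8 + 189 * (Polynomial.C ζ) ^ 9 + 189 * (Polynomial.C ζ) ^ 10
          - 108 * (Polynomial.C ζ) ^ 12 - 162 * (Polynomial.C ζ) ^ 13
          + 54 * (Polynomial.C ζ) ^ 16) * Polynomial.X ^ 3
        + (2754 + 810 * (Polynomial.C ζ) ^ 2 + 567 * (Polynomial.C ζ) ^ 3
          + 243 * (Polynomial.C ζ) ^ 5 - 1053 * (Polynomial.C ζ) ^ 6 - 243 * (Polynomial.C ζ) ^ 8
          + 648 * (Polynomial.C ζ) ^ 9 - 81 * (Polynomial.C ζ) ^ 11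
          + 162 * (Polynomial.C ζ) ^ 12 - 162 * (Polynomial.C ζ) ^ 15) * Polynomial.X ^ 4)
        * h6'

end
end
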